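/- (Binet formula for the matrix sequence) For a, b > 0 with α = (ab + √(a²b² + 8ab))/2 and β = (ab − √(a²b² + 8ab))/2, and for every n ≥ 0: J_n = A·(α^n − β^n) + B·(α^{2⌊n/2⌋+2} − β^{2⌊n/2⌋+2}), where A = (J_1 − b·J_0)^{ε(n)}·(a·J_1 − 2·J_0 − ab·J_0)^{1−ε(n)} / ((ab)^{⌊n/2⌋}·(α − β)) with the convention that for even n the factor is (a·J_1 − 2·J_0 − ab·J_0) and for odd n it is (J_1 − b·J_0), and B = b^{ε(n)}·J_0 / ((ab)^{⌊n/2⌋+1}·(α − β)), with ε(n) = 0 for even n and 1 for odd n. -/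

import Mathlib

/-! The characteristic numbers α, β are the roots of `t² - ab·t - c·ab` (here `c = 2`), so
`α^(k+2) = ab·α^(k+1) + c·ab·α^k`, and likewise for β. With this, the even- and odd-indexed
terms of a bi-periodic sequence satisfy, after scaling by `(ab)^m (α - β)`, linear identities in
`x 0` and `x 1`, proved by a simultaneous induction on `m`. Dividing by the scale and writing
`α^(2m+2) - β^(2m+2) = ab·(α^(2m+1) - β^(2m+1) + c·(α^(2m) - β^(2m)))` gives the stated form. -/

noncomputable def JM (a b : ℝ) : ℕ → Matrix (Fin 2) (Fin 2) ℝ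
  | 0 => 1
  | 1 => !![b, 2 * b / a; 1, 0]
  | n + 2 => (if Even (n + 2) then a else b) • JM a b (n + 1) + (2 : ℝ) • JM a b n

namespace BiperiodicSeq

variable {R M : Type*} [CommRing R] [AddCommGroup M] [Module R M]
  {a b c α β : R} {x : ℕ → M}

theorem pow_add_two_of_roots (hsum : α + β = a * b) (hprod : α * β = -(c * (a * b))) (k : ℕ) :
    α ^ (k + 2) = a * b * α ^ (k + 1) + c * (a * b) * α ^ k := by
  linear_combination α ^ k * (α * hsum - hprod)

theorem binet_smul
    (heven : ∀ m, x (2 * m + 2) = a • x (2 * m + 1) + c • x (2 * m))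
    (hodd : ∀ m, x (2 * m + 3) = b • x (2 * m + 2) + c • x (2 * m + 1))
    (hsum : α + β = a * b) (hprod : α * β = -(c * (a * b))) (m : ℕ) :
    ((a * b) ^ m * (α - β)) • x (2 * m)
        = (a * (α ^ (2 * m) - β ^ (2 * m))) • x 1
          + (α * β ^ (2 * m) - β * α ^ (2 * m)) • x 0 ∧
      ((a * b) ^ m * (α - β)) • x (2 * m + 1)
        = (α ^ (2 * m + 1) - β ^ (2 * m + 1)) • x 1
          + (c * b * (α ^ (2 * m) - β ^ (2 * m))) • x 0 := by
  have hβsum : β + α = a * b := by rw [add_comm, hsum]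
  have hβprod : β * α = -(c * (a * b)) := by rw [mul_comm, hprod]
  have hα := pow_add_two_of_roots (c := c) hsum hprod
  have hβ := pow_add_two_of_roots (c := c) hβsum hβprod
  induction m with
  | zero => constructor <;> · simp only [pow_zero, mul_zero, zero_add, pow_one]; module
  | succ m ih =>
    obtain ⟨ihe, iho⟩ := ih
    have he : ((a * b) ^ (m + 1) * (α - β)) • x (2 * (m + 1))
        = (a * (α ^ (2 * (m + 1)) - β ^ (2 * (m + 1)))) • x 1
          + (α * β ^ (2 * (m + 1)) - β * α ^ (2 * (m + 1))) • x 0 := by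
      calc ((a * b) ^ (m + 1) * (α - β)) • x (2 * (m + 1))
          = (a * (a * b)) • (((a * b) ^ m * (α - β)) • x (2 * m + 1))
            + (c * (a * b)) • (((a * b) ^ m * (α - β)) • x (2 * m)) := by
            rw [show 2 * (m + 1) = 2 * m + 2 by ring, heven, smul_smul, smul_smul]
            module
        _ = _ := by
            rw [ihe, iho, show 2 * (m + 1) = 2 * m + 2 by ring]
            match_scalars
            · linear_combination -a * (hα (2 * m) - hβ (2 * m))
            · linear_combination β * hα (2 * m) - α * hβ (2 * m)
                + a * b * (α ^ (2 * m) - β ^ (2 * m)) * hprod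
    refine ⟨he, ?_⟩
    calc ((a * b) ^ (m + 1) * (α - β)) • x (2 * (m + 1) + 1)
        = b • (((a * b) ^ (m + 1) * (α - β)) • x (2 * (m + 1)))
          + (c * (a * b)) • (((a * b) ^ m * (α - β)) • x (2 * m + 1)) := by
          rw [show 2 * (m + 1) + 1 = 2 * m + 3 by ring, hodd, smul_smul, smul_smul,
            show 2 * m + 2 = 2 * (m + 1) by ring]
          module
      _ = _ := by
          rw [he, iho]
          match_scalars
          · linear_combination -(hα (2 * m + 1) - hβ (2 * m + 1))
          · linear_combination b * (β ^ (2 * m) * β - α ^ (2 * m) * α) * hprod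
              + b * c * (β ^ (2 * m) * hβ 0 - α ^ (2 * m) * hα 0)

theorem binet {K M : Type*} [Field K] [AddCommGroup M] [Module K M] {a b c α β : K}
    {x : ℕ → M}
    (heven : ∀ m, x (2 * m + 2) = a • x (2 * m + 1) + c • x (2 * m))
    (hodd : ∀ m, x (2 * m + 3) = b • x (2 * m + 2) + c • x (2 * m + 1))
    (hsum : α + β = a * b) (hprod : α * β = -(c * (a * b)))
    (hab : a * b ≠ 0) (hαβ : α ≠ β) (n : ℕ) :
    x n = (α ^ n - β ^ n) • (((a * b) ^ (n / 2) * (α - β))⁻¹ •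
        (if Even n then a • x 1 - c • x 0 - (a * b) • x 0 else x 1 - b • x 0))
      + (α ^ (2 * (n / 2) + 2) - β ^ (2 * (n / 2) + 2)) •
        ((b ^ (n % 2) / ((a * b) ^ (n / 2 + 1) * (α - β))) • x 0) := by
  have hα := pow_add_two_of_roots (c := c) hsum hprod
  have hβ := pow_add_two_of_roots (c := c) (by rw [add_comm, hsum]) (by rw [mul_comm, hprod])
  have hsub : α - β ≠ 0 := sub_ne_zero.mpr hαβ
  have ha : a ≠ 0 := left_ne_zero_of_mul hab
  have hb : b ≠ 0 := right_ne_zero_of_mul hab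
  obtain ⟨m, rfl | rfl⟩ := Nat.even_or_odd' n
  · have hD : (a * b) ^ m * (α - β) ≠ 0 := by positivity
    obtain ⟨he, -⟩ := binet_smul heven hodd hsum hprod m
    simp only [show 2 * m / 2 = m by omega, show 2 * m % 2 = 0 by omega, even_two_mul,
      if_true, pow_zero]
    apply smul_right_injective M hD
    simp only [he]
    match_scalars
    · field_simp
    · field_simp
      linear_combination (a * b) ^ m *
        (hβ (2 * m) - hα (2 * m) - a * b * (α ^ (2 * m) - β ^ (2 * m)) * hsum)
  · have hD : (a * b) ^ m * (α - β) ≠ 0 := by positivity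
    obtain ⟨-, ho⟩ := binet_smul heven hodd hsum hprod m
    simp only [show (2 * m + 1) / 2 = m by omega, show (2 * m + 1) % 2 = 1 by omega,
      Nat.not_even_two_mul_add_one, if_false, pow_one]
    apply smul_right_injective M hD
    simp only [ho]
    match_scalars
    · field_simp
    · field_simp
      linear_combination (a * b) ^ m * (hβ (2 * m) - hα (2 * m))

end BiperiodicSeq

theorem JM_two_mul_add_two (a b : ℝ) (m : ℕ) :
    JM a b (2 * m + 2) = a • JM a b (2 * m + 1) + (2 : ℝ) • JM a b (2 * m) := by
  rw [JM, if_pos (by simp [parity_simps])]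

theorem JM_two_mul_add_three (a b : ℝ) (m : ℕ) :
    JM a b (2 * m + 3) = b • JM a b (2 * m + 2) + (2 : ℝ) • JM a b (2 * m + 1) := by
  rw [JM, if_neg (by simp [parity_simps])]

theorem sum_prod_ne_of_roots {a b α β : ℝ} (hab : 0 < a * b)
    (hα : α = (a * b + Real.sqrt (a ^ 2 * b ^ 2 + 8 * a * b)) / 2)
    (hβ : β = (a * b - Real.sqrt (a ^ 2 * b ^ 2 + 8 * a * b)) / 2) :
    α + β = a * b ∧ α * β = -(2 * (a * b)) ∧ α ≠ β := by
  have hdisc : 0 < a ^ 2 * b ^ 2 + 8 * a * b := by nlinarith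
  have hsq := Real.sq_sqrt hdisc.le
  have hpos := Real.sqrt_pos.mpr hdisc
  subst hα hβ
  refine ⟨by ring, by linear_combination (-1 / 4 : ℝ) * hsq, by intro h; linarith⟩

theorem stmt19 (a b : ℝ) (ha : 0 < a) (hb : 0 < b) (n : ℕ)
    (α β : ℝ)
    (hα : α = (a * b + Real.sqrt (a ^ 2 * b ^ 2 + 8 * a * b)) / 2)
    (hβ : β = (a * b - Real.sqrt (a ^ 2 * b ^ 2 + 8 * a * b)) / 2)
    (A B : Matrix (Fin 2) (Fin 2) ℝ)
    (hA : A = ((a * b) ^ (n / 2) * (α - β))⁻¹ •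
        (if Even n then a • JM a b 1 - (2 : ℝ) • JM a b 0 - (a * b) • JM a b 0
         else JM a b 1 - b • JM a b 0))
    (hB : B = (b ^ (n % 2) / ((a * b) ^ (n / 2 + 1) * (α - β))) • JM a b 0) :
    JM a b n = (α ^ n - β ^ n) • A
        + (α ^ (2 * (n / 2) + 2) - β ^ (2 * (n / 2) + 2)) • B := by
  have hab : 0 < a * b := mul_pos ha hb
  obtain ⟨hsum, hprod, hαβ⟩ := sum_prod_ne_of_roots hab hα hβ
  subst hA hB
  exact BiperiodicSeq.binet (JM_two_mul_add_two a b) (JM_two_mul_add_three a b) hsum hprod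
    hab.ne' hαβ n
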